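/- Let Δ be the rectangle of width c and height d with boundary data μ₁ = (c) (a single part c on the bottom edge) and ν₂ = (d) (a single part d on the right edge), and arbitrary partitions μ₂ of c on the top edge and ν₁ of d on the left edge. Suppose γ is a λ-increasing lattice path from (0,d) to (c,0) in Δ with mult(γ) ≠ 0, and γ′ is a lattice path (possibly γ′ = γ) such that either γ ≺_R γ′ and mult₊(γ′) ≠ 0, or γ ≺_L γ′ and mult₋(γ′) ≠ 0. Then γ′ contains no lattice point in the relative interior of the right edge {c}×[0,d] of Δ and no lattice point in the relative interior of the bottom edge [0,c]×{0} of Δ. -/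

import Mathlib

open Classical

noncomputable section

namespace TropPaths

/-- Lattice points of the plane. -/
abbrev Pt := ℤ × ℤ

/-- The order on `ℤ²` induced by `λ(x,y) = x - εy` for a small irrational `ε > 0`:
`p ≺ q` iff `p₁ < q₁`, or (`p₁ = q₁` and `p₂ > q₂`). -/
def lamLT (p q : Pt) : Prop := p.1 < q.1 ∨ (p.1 = q.1 ∧ q.2 < p.2)

/-- A lattice path, recorded as the list of its points, is `λ`-increasing. -/
def Increasing (γ : List Pt) : Prop := List.Chain' lamLT γ

/-- The determinant of two vectors in `ℤ²`. -/
def det (u v : Pt) : ℤ := u.1 * v.2 - u.2 * v.1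

/-- The `k`-th point of a path (junk value out of range). -/
def pt (γ : List Pt) (k : ℕ) : Pt := γ.getD k (0, 0)

/-- The `k`-th step vector of a path. -/
def stepAt (γ : List Pt) (k : ℕ) : Pt := pt γ (k + 1) - pt γ k

/-- The list of all step vectors of a path. -/
def steps (γ : List Pt) : List Pt := List.zipWith (fun a b => b - a) γ γ.tail

/-- The multiset of down steps `(0,-s)`, `s > 0`, of a path. -/
def downSteps (γ : List Pt) : Multiset Pt :=
  Multiset.filter (fun v => v.1 = 0 ∧ v.2 < 0) (steps γ : Multiset Pt)

/-- The multiset of up-right steps of a path. -/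
def upRightSteps (γ : List Pt) : Multiset Pt :=
  Multiset.filter (fun v => 0 < v.1 ∧ 0 < v.2) (steps γ : Multiset Pt)

/-- The path makes a turn of sign `s` at the (interior) index `k`; for left turns
`s = (0 < ·)`, for right turns `s = (· < 0)`. -/
def TurnAt (s : ℤ → Prop) (γ : List Pt) (k : ℕ) : Prop :=
  0 < k ∧ k + 1 < γ.length ∧ s (det (pt γ k - pt γ (k - 1)) (pt γ (k + 1) - pt γ k))

/-- `k` is the first turn of sign `s` of the path. -/
def FirstTurn (s : ℤ → Prop) (γ : List Pt) (k : ℕ) : Prop :=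
  TurnAt s γ k ∧ ∀ j, TurnAt s γ j → k ≤ j

/-- Twice the area of the triangle with vertices `γ(k-1), γ(k), γ(k+1)`. -/
def triArea2 (γ : List Pt) (k : ℕ) : ℕ :=
  (det (pt γ k - pt γ (k - 1)) (pt γ (k + 1) - pt γ k)).natAbs

/-- The path obtained by cutting the corner at index `k`, i.e. deleting the point `γ(k)`. -/
def cut (γ : List Pt) (k : ℕ) : List Pt := γ.eraseIdx k

/-- The path obtained by completing the parallelogram at index `k`, i.e. replacing
`γ(k)` by `γ(k-1) + γ(k+1) - γ(k)`. -/
def push (γ : List Pt) (k : ℕ) : List Pt :=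
  γ.set k (pt γ (k - 1) + pt γ (k + 1) - pt γ k)

/-- All points of the path lie in `Δ`. -/
def Inside (Δ : Set Pt) (γ : List Pt) : Prop := ∀ z ∈ γ, z ∈ Δ

/-- Mikhalkin's multiplicity recursion, as a functional relation: `MultRel Δ Init s γ m`
means that the recursion (performed always at the *first* turn of sign `s`) assigns the
multiplicity `m` to the path `γ`.  Here `Δ` is the set of lattice points of the polygon,
`Init` the set of initial paths (of multiplicity `1`), and `s` the turn sign
(`0 < ·` for left turns / `mult₊`, `· < 0` for right turns / `mult₋`). -/
inductive MultRel (Δ : Set Pt) (Init : List Pt → Prop) (s : ℤ → Prop) : List Pt → ℕ → Prop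
  | init {γ : List Pt} : Init γ → MultRel Δ Init s γ 1
  | noTurn {γ : List Pt} : ¬Init γ → (∀ k, ¬TurnAt s γ k) → MultRel Δ Init s γ 0
  | stepIn {γ : List Pt} {k m' m'' : ℕ} : ¬Init γ → FirstTurn s γ k →
      Inside Δ (push γ k) → MultRel Δ Init s (cut γ k) m' →
      MultRel Δ Init s (push γ k) m'' →
      MultRel Δ Init s γ (triArea2 γ k * m' + m'')
  | stepOut {γ : List Pt} {k m' : ℕ} : ¬Init γ → FirstTurn s γ k →
      ¬Inside Δ (push γ k) → MultRel Δ Init s (cut γ k) m' →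
      MultRel Δ Init s γ (triArea2 γ k * m')

/-- The multiplicity function determined by Mikhalkin's recursion. -/
def multOf (Δ : Set Pt) (Init : List Pt → Prop) (s : ℤ → Prop) (γ : List Pt) : ℕ :=
  if h : ∃ m, MultRel Δ Init s γ m then h.choose else 0

/-- `γ ≺ δ`: the path `δ` is obtained from `γ` by finitely many steps of the multiplicity
recursion (each step cuts the corner at the first turn of sign `s`, or completes the
parallelogram there). -/
inductive Reaches (Δ : Set Pt) (Init : List Pt → Prop) (s : ℤ → Prop) : List Pt → List Pt → Prop
  | refl (γ : List Pt) : Reaches Δ Init s γ γ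
  | cutStep {γ δ : List Pt} {k : ℕ} : ¬Init γ → FirstTurn s γ k →
      Reaches Δ Init s (cut γ k) δ → Reaches Δ Init s γ δ
  | pushStep {γ δ : List Pt} {k : ℕ} : ¬Init γ → FirstTurn s γ k →
      Inside Δ (push γ k) → Reaches Δ Init s (push γ k) δ → Reaches Δ Init s γ δ

/-- The lattice path starting at `p` with the given list of step vectors. -/
def pathFrom : Pt → List Pt → List Pt
  | p, [] => [p]
  | p, v :: vs => p :: pathFrom (p + v) vs

/-- Horizontal (rightward) steps of the given sizes. -/
def hSteps (l : List ℕ) : List Pt := l.map fun k => ((k : ℤ), 0)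

/-- Vertical downward steps of the given sizes. -/
def dSteps (l : List ℕ) : List Pt := l.map fun k => ((0 : ℤ), -(k : ℤ))

/-- A multiset of positive integers is a partition of `t`. -/
def IsPartition (m : Multiset ℕ) (t : ℕ) : Prop := (∀ k ∈ m, 0 < k) ∧ m.sum = t

/-! ## The rectangle `[0,c] × [0,d]` -/

/-- The lattice points of the rectangle with vertices `(0,0), (c,0), (0,d), (c,d)`. -/
def rect (c d : ℕ) : Set Pt := {z | 0 ≤ z.1 ∧ z.1 ≤ (c : ℤ) ∧ 0 ≤ z.2 ∧ z.2 ≤ (d : ℤ)}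

/-- `β₊`-initial paths of the rectangle: from `p = (0,d)` clockwise along the top edge with
step sizes the parts of `μ₂` and then down the right edge with step sizes the parts of `ν₂`. -/
def InitPlusRect (d : ℕ) (μ₂ ν₂ : Multiset ℕ) (γ : List Pt) : Prop :=
  ∃ s t : List ℕ, (s : Multiset ℕ) = μ₂ ∧ (t : Multiset ℕ) = ν₂ ∧
    γ = pathFrom (0, (d : ℤ)) (hSteps s ++ dSteps t)

/-- `β₋`-initial paths of the rectangle: from `p = (0,d)` counterclockwise down the left edge
with step sizes the parts of `ν₁` and then along the bottom edge with step sizes the parts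
of `μ₁`. -/
def InitMinusRect (d : ℕ) (μ₁ ν₁ : Multiset ℕ) (γ : List Pt) : Prop :=
  ∃ s t : List ℕ, (s : Multiset ℕ) = ν₁ ∧ (t : Multiset ℕ) = μ₁ ∧
    γ = pathFrom (0, (d : ℤ)) (dSteps s ++ hSteps t)

/-- `mult₊` for the rectangle with boundary data `(μ₁, μ₂, ν₁, ν₂)`. -/
def multPlusRect (c d : ℕ) (μ₂ ν₂ : Multiset ℕ) : List Pt → ℕ :=
  multOf (rect c d) (InitPlusRect d μ₂ ν₂) (fun x => 0 < x)

/-- `mult₋` for the rectangle with boundary data `(μ₁, μ₂, ν₁, ν₂)`. -/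
def multMinusRect (c d : ℕ) (μ₁ ν₁ : Multiset ℕ) : List Pt → ℕ :=
  multOf (rect c d) (InitMinusRect d μ₁ ν₁) (fun x => x < 0)

/-- `mult = mult₊ · mult₋` for the rectangle with boundary data `(μ₁, μ₂, ν₁, ν₂)`. -/
def multRect (c d : ℕ) (μ₁ μ₂ ν₁ ν₂ : Multiset ℕ) (γ : List Pt) : ℕ :=
  multPlusRect c d μ₂ ν₂ γ * multMinusRect c d μ₁ ν₁ γ

/-- A `λ`-increasing lattice path from `(0,d)` to `(c,0)` contained in the rectangle. -/
def IsPathRect (c d : ℕ) (γ : List Pt) : Prop :=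
  Increasing γ ∧ γ.head? = some (0, (d : ℤ)) ∧ γ.getLast? = some ((c : ℤ), 0) ∧
    Inside (rect c d) γ

/-- The genericity condition: all subset sums of the `xᵢ` are distinct. -/
def Generic {n : ℕ} (x : Fin n → ℕ) : Prop :=
  ∀ I J : Finset (Fin n), I ≠ J → ∑ i ∈ I, x i ≠ ∑ j ∈ J, x j

/-!
A step of the `mult₊` recursion at the first left turn `γ(k)` keeps every other point of `γ`
in both children, and one child of a path with `mult₊ ≠ 0` again has `mult₊ ≠ 0`. A left turn
cannot sit on the line `x = c`, and for `ν₂ = (d)` the `β₊`-initial paths meet that line only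
at its endpoints; so `mult₊(γ) ≠ 0` keeps `γ` off the open right edge. Symmetrically
`mult₋(γ) ≠ 0` keeps `γ` off the open bottom edge, since `μ₁ = (c)` and right turns cannot sit
on `y = 0`. Finally, completing the parallelogram at a left turn never produces a point on
`y = 0`, and at a right turn never one on `x = c`, so the property guaranteed by the other
multiplicity of `γ` survives along `≺_R`, resp. `≺_L`.
-/

instance : Trans lamLT lamLT lamLT where
  trans h₁ h₂ := by unfold lamLT at *; omega

lemma lamLT_add_sub_left {a b e : Pt} (h : lamLT b e) : lamLT a (a + e - b) := by
  unfold lamLT at *; simp only [Prod.fst_add, Prod.fst_sub, Prod.snd_add, Prod.snd_sub]; omega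

lemma lamLT_add_sub_right {a b e : Pt} (h : lamLT a b) : lamLT (a + e - b) e := by
  unfold lamLT at *; simp only [Prod.fst_add, Prod.fst_sub, Prod.snd_add, Prod.snd_sub]; omega

lemma lamLT.fst_le {p q : Pt} (h : lamLT p q) : p.1 ≤ q.1 := by
  unfold lamLT at h; omega

section Paths

variable {γ : List Pt} {k : ℕ} {z : Pt}

lemma pt_eq_getElem (h : k < γ.length) : pt γ k = γ[k] := by
  simp [pt, List.getD_eq_getElem?_getD, List.getElem?_eq_getElem h]

lemma pt_mem (h : k < γ.length) : pt γ k ∈ γ := by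
  rw [pt_eq_getElem h]
  exact List.getElem_mem h

lemma increasing_iff_pt :
    Increasing γ ↔ ∀ k, k + 1 < γ.length → lamLT (pt γ k) (pt γ (k + 1)) := by
  change List.IsChain lamLT γ ↔ _
  rw [List.isChain_iff_getElem]
  refine forall_congr' fun k => ⟨fun h hk => ?_, fun h hk => ?_⟩
  · rw [pt_eq_getElem (by omega), pt_eq_getElem hk]
    exact h hk
  · simpa only [pt_eq_getElem (by omega : k < γ.length), pt_eq_getElem hk] using h hk

lemma length_push : (push γ k).length = γ.length := List.length_set

lemma pt_push_of_ne {j : ℕ} (h : j ≠ k) : pt (push γ k) j = pt γ j := by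
  simp only [pt, push, List.getD_eq_getElem?_getD, List.getElem?_set, if_neg h.symm]

lemma pt_push_self (h : k < γ.length) :
    pt (push γ k) k = pt γ (k - 1) + pt γ (k + 1) - pt γ k := by
  simp [pt, push, List.getD_eq_getElem?_getD, h]

lemma Increasing.cut (hI : Increasing γ) : Increasing (cut γ k) :=
  List.IsChain.sublist hI (List.eraseIdx_sublist γ k)

lemma Increasing.push (hI : Increasing γ) (hk₀ : 0 < k) (hk : k + 1 < γ.length) :
    Increasing (push γ k) := by
  rw [increasing_iff_pt] at hI ⊢
  intro j hj
  rw [length_push] at hj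
  obtain rfl | hjk := eq_or_ne j k
  · rw [pt_push_self (by omega), pt_push_of_ne (by omega)]
    exact lamLT_add_sub_right (by simpa [Nat.sub_add_cancel hk₀] using hI (j - 1) (by omega))
  obtain rfl | hjk' := eq_or_ne (j + 1) k
  · rw [pt_push_of_ne hjk, pt_push_self hj, Nat.add_sub_cancel]
    exact lamLT_add_sub_left (hI (j + 1) hk)
  · rw [pt_push_of_ne hjk, pt_push_of_ne hjk']
    exact hI j hj

lemma Inside.cut {Δ : Set Pt} (h : Inside Δ γ) : Inside Δ (cut γ k) :=
  fun z hz => h z (List.mem_of_mem_eraseIdx hz)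

lemma mem_cut_or_eq_pt (hz : z ∈ γ) : z ∈ cut γ k ∨ z = pt γ k := by
  obtain ⟨i, hi, rfl⟩ := List.mem_iff_getElem.1 hz
  obtain rfl | hik := eq_or_ne i k
  · exact .inr (pt_eq_getElem hi).symm
  · exact .inl (List.mem_eraseIdx_iff_getElem.2 ⟨i, hi, hik, rfl⟩)

lemma mem_push_or_eq_pt (hz : z ∈ γ) : z ∈ push γ k ∨ z = pt γ k := by
  obtain ⟨i, hi, rfl⟩ := List.mem_iff_getElem.1 hz
  obtain rfl | hik := eq_or_ne i k
  · exact .inr (pt_eq_getElem hi).symm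
  · rw [← pt_eq_getElem hi, ← pt_push_of_ne hik]
    exact .inl (pt_mem (by rwa [length_push]))

end Paths

structure IsTurn (Δ : Set Pt) (s : ℤ → Prop) (a b e : Pt) : Prop where
  mem_left : a ∈ Δ
  mem_mid : b ∈ Δ
  mem_right : e ∈ Δ
  lt_mid : lamLT a b
  mid_lt : lamLT b e
  sign : s (det (b - a) (e - b))

section Recursion

variable {Δ : Set Pt} {Init : List Pt → Prop} {s : ℤ → Prop} {P : Pt → Prop} {γ δ : List Pt}
  {k : ℕ}

lemma TurnAt.isTurn (h : TurnAt s γ k) (hI : Increasing γ) (hin : Inside Δ γ) :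
    IsTurn Δ s (pt γ (k - 1)) (pt γ k) (pt γ (k + 1)) := by
  obtain ⟨hk₀, hk, hs⟩ := h
  have hlt := increasing_iff_pt.1 hI
  refine ⟨hin _ (pt_mem (by omega)), hin _ (pt_mem (by omega)), hin _ (pt_mem hk), ?_,
    hlt k hk, hs⟩
  simpa [Nat.sub_add_cancel hk₀] using hlt (k - 1) (by omega)

lemma forall_mem_of_forall_mem_cut (h : ∀ z ∈ cut γ k, P z) (hk : P (pt γ k)) :
    ∀ z ∈ γ, P z := fun z hz => (mem_cut_or_eq_pt hz).elim (h z) (· ▸ hk)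

lemma forall_mem_of_forall_mem_push (h : ∀ z ∈ push γ k, P z) (hk : P (pt γ k)) :
    ∀ z ∈ γ, P z := fun z hz => (mem_push_or_eq_pt hz).elim (h z) (· ▸ hk)

theorem MultRel.forall_mem_of_ne_zero (hinit : ∀ γ, Init γ → ∀ z ∈ γ, P z)
    (hturn : ∀ a b e, IsTurn Δ s a b e → P b) {m : ℕ} (h : MultRel Δ Init s γ m)
    (hm : m ≠ 0) (hI : Increasing γ) (hin : Inside Δ γ) : ∀ z ∈ γ, P z := by
  induction h with
  | init hγ => exact hinit _ hγ
  | noTurn => exact absurd rfl hm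
  | @stepIn γ k m' m'' _ hk hpushIn _ _ ihcut ihpush =>
    have hPk := hturn _ _ _ (hk.1.isTurn hI hin)
    obtain hm'' | hm'' := eq_or_ne m'' 0
    · have hm' : m' ≠ 0 := by rintro rfl; simp [hm''] at hm
      exact forall_mem_of_forall_mem_cut (ihcut hm' hI.cut hin.cut) hPk
    · exact forall_mem_of_forall_mem_push (ihpush hm'' (hI.push hk.1.1 hk.1.2.1) hpushIn) hPk
  | stepOut _ hk _ _ ihcut =>
    have hm' : _ ≠ 0 := right_ne_zero_of_mul hm
    exact forall_mem_of_forall_mem_cut (ihcut hm' hI.cut hin.cut)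
      (hturn _ _ _ (hk.1.isTurn hI hin))

theorem forall_mem_of_multOf_ne_zero (hinit : ∀ γ, Init γ → ∀ z ∈ γ, P z)
    (hturn : ∀ a b e, IsTurn Δ s a b e → P b) (h : multOf Δ Init s γ ≠ 0)
    (hI : Increasing γ) (hin : Inside Δ γ) : ∀ z ∈ γ, P z := by
  unfold multOf at h
  split_ifs at h with hex
  · exact hex.choose_spec.forall_mem_of_ne_zero hinit hturn h hI hin
  · exact absurd rfl h

theorem Reaches.increasing (h : Reaches Δ Init s γ δ) (hI : Increasing γ) : Increasing δ := by
  induction h with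
  | refl => exact hI
  | cutStep _ _ _ ih => exact ih hI.cut
  | pushStep _ hk _ _ ih => exact ih (hI.push hk.1.1 hk.1.2.1)

theorem Reaches.inside (h : Reaches Δ Init s γ δ) (hin : Inside Δ γ) : Inside Δ δ := by
  induction h with
  | refl => exact hin
  | cutStep _ _ _ ih => exact ih hin.cut
  | pushStep _ _ hpushIn _ ih => exact ih hpushIn

theorem Reaches.forall_mem (hnew : ∀ a b e, IsTurn Δ s a b e → P (a + e - b))
    (h : Reaches Δ Init s γ δ) (hI : Increasing γ) (hin : Inside Δ γ) (hP : ∀ z ∈ γ, P z) :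
    ∀ z ∈ δ, P z := by
  induction h with
  | refl => exact hP
  | cutStep _ _ _ ih => exact ih hI.cut hin.cut fun z hz => hP z (List.mem_of_mem_eraseIdx hz)
  | pushStep _ hk hpushIn _ ih =>
    refine ih (hI.push hk.1.1 hk.1.2.1) hpushIn fun z hz => ?_
    obtain hz | rfl := List.mem_or_eq_of_mem_set hz
    · exact hP z hz
    · exact hnew _ _ _ (hk.1.isTurn hI hin)

end Recursion

def OnRightSide (c d : ℕ) (z : Pt) : Prop := z.1 = c ∧ 0 < z.2 ∧ z.2 < d

def OnBottomSide (c : ℕ) (z : Pt) : Prop := z.2 = 0 ∧ 0 < z.1 ∧ z.1 < c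

section Rectangle

variable {c d : ℕ} {a b e : Pt}

lemma IsTurn.fst_ne_of_left (h : IsTurn (rect c d) (0 < ·) a b e) : b.1 ≠ c := by
  obtain ⟨-, -, ⟨-, he, -⟩, hab, hbe, hs⟩ := h
  intro hb
  have hv : e.1 = b.1 ∧ e.2 < b.2 := by unfold lamLT at hbe; omega
  have hu := hab.fst_le
  simp only [det, Prod.fst_sub, Prod.snd_sub, hv.1, sub_self, mul_zero, sub_zero] at hs
  nlinarith

lemma IsTurn.snd_ne_zero_of_right (h : IsTurn (rect c d) (· < 0) a b e) : b.2 ≠ 0 := by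
  obtain ⟨⟨-, -, ha, -⟩, -, ⟨-, -, he, -⟩, hab, hbe, hs⟩ := h
  intro hb
  have hu := hab.fst_le
  have hv := hbe.fst_le
  simp only [det, Prod.fst_sub, Prod.snd_sub, hb] at hs
  nlinarith

lemma IsTurn.fst_add_sub_ne_of_right (h : IsTurn (rect c d) (· < 0) a b e) :
    (a + e - b).1 ≠ c := by
  obtain ⟨-, -, ⟨-, he, -⟩, hab, hbe, hs⟩ := h
  simp only [Prod.fst_sub, Prod.fst_add]
  intro hn
  have hu : a.1 = b.1 ∧ b.2 < a.2 := by unfold lamLT at hab; omega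
  have hv := hbe.fst_le
  simp only [det, Prod.fst_sub, Prod.snd_sub, hu.1, sub_self, zero_mul, zero_sub] at hs
  nlinarith

lemma IsTurn.snd_add_sub_ne_zero_of_left (h : IsTurn (rect c d) (0 < ·) a b e) :
    (a + e - b).2 ≠ 0 := by
  obtain ⟨⟨-, -, ha, -⟩, -, ⟨-, -, he, -⟩, hab, hbe, hs⟩ := h
  simp only [Prod.snd_sub, Prod.snd_add]
  intro hn
  -- with `u = b - a`, `v = e - b`: `u₁, v₁ ≥ 0`, `u₂ = e₂ ≥ 0`, `v₂ = -a₂ ≤ 0`, so `det u v ≤ 0`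
  have hu := hab.fst_le
  have hv := hbe.fst_le
  simp only [det, Prod.fst_sub, Prod.snd_sub] at hs
  nlinarith

lemma mem_pathFrom_self {p : Pt} {vs : List Pt} : p ∈ pathFrom p vs := by
  cases vs <;> simp [pathFrom]

lemma exists_snd_eq_of_mem_pathFrom_hSteps_append {p z : Pt} {l : List ℕ} {ws : List Pt}
    (hz : z ∈ pathFrom p (hSteps l ++ ws)) : ∃ q : Pt, q.2 = p.2 ∧ z ∈ pathFrom q ws := by
  induction l generalizing p with
  | nil => exact ⟨p, rfl, hz⟩
  | cons a l ih =>
    obtain rfl | hz := List.mem_cons.1 hz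
    · exact ⟨z, rfl, mem_pathFrom_self⟩
    · obtain ⟨q, hq, hz⟩ := ih hz
      exact ⟨q, by simpa using hq, hz⟩

lemma exists_fst_eq_of_mem_pathFrom_dSteps_append {p z : Pt} {l : List ℕ} {ws : List Pt}
    (hz : z ∈ pathFrom p (dSteps l ++ ws)) : ∃ q : Pt, q.1 = p.1 ∧ z ∈ pathFrom q ws := by
  induction l generalizing p with
  | nil => exact ⟨p, rfl, hz⟩
  | cons a l ih =>
    obtain rfl | hz := List.mem_cons.1 hz
    · exact ⟨z, rfl, mem_pathFrom_self⟩
    · obtain ⟨q, hq, hz⟩ := ih hz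
      exact ⟨q, by simpa using hq, hz⟩

lemma InitPlusRect.not_onRightSide {μ₂ : Multiset ℕ} {γ : List Pt}
    (h : InitPlusRect d μ₂ {d} γ) : ∀ z ∈ γ, ¬OnRightSide c d z := by
  obtain ⟨l, t, -, ht, rfl⟩ := h
  obtain rfl := Multiset.coe_eq_singleton.1 ht
  intro z hz
  obtain ⟨q, hq, hz⟩ := exists_snd_eq_of_mem_pathFrom_hSteps_append hz
  change z ∈ [q, q + (0, -(d : ℤ))] at hz
  rcases List.mem_pair.1 hz with rfl | rfl <;> simp [OnRightSide, hq]

lemma InitMinusRect.not_onBottomSide {ν₁ : Multiset ℕ} {γ : List Pt}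
    (h : InitMinusRect d {c} ν₁ γ) : ∀ z ∈ γ, ¬OnBottomSide c z := by
  obtain ⟨l, t, -, ht, rfl⟩ := h
  obtain rfl := Multiset.coe_eq_singleton.1 ht
  intro z hz
  obtain ⟨q, hq, hz⟩ := exists_fst_eq_of_mem_pathFrom_dSteps_append hz
  change z ∈ [q, q + ((c : ℤ), 0)] at hz
  rcases List.mem_pair.1 hz with rfl | rfl <;> simp [OnBottomSide, hq]

variable {γ : List Pt}

theorem forall_not_onRightSide_of_multPlusRect_ne_zero {μ₂ : Multiset ℕ}
    (h : multPlusRect c d μ₂ {d} γ ≠ 0) (hI : Increasing γ) (hin : Inside (rect c d) γ) :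
    ∀ z ∈ γ, ¬OnRightSide c d z :=
  forall_mem_of_multOf_ne_zero (fun _ => InitPlusRect.not_onRightSide)
    (fun _ _ _ hturn hz => hturn.fst_ne_of_left hz.1) h hI hin

theorem forall_not_onBottomSide_of_multMinusRect_ne_zero {ν₁ : Multiset ℕ}
    (h : multMinusRect c d {c} ν₁ γ ≠ 0) (hI : Increasing γ) (hin : Inside (rect c d) γ) :
    ∀ z ∈ γ, ¬OnBottomSide c z :=
  forall_mem_of_multOf_ne_zero (fun _ => InitMinusRect.not_onBottomSide)
    (fun _ _ _ hturn hz => hturn.snd_ne_zero_of_right hz.1) h hI hin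

end Rectangle

theorem no_interior_boundary_point_of_reaches_general (c d : ℕ)
    (μ₂ ν₁ : Multiset ℕ)
    (γ γ' : List Pt) (hγ : IsPathRect c d γ)
    (hmult : multRect c d {c} μ₂ ν₁ {d} γ ≠ 0)
    (h : (Reaches (rect c d) (InitPlusRect d μ₂ {d}) (fun x => 0 < x) γ γ' ∧
            multPlusRect c d μ₂ {d} γ' ≠ 0) ∨
         (Reaches (rect c d) (InitMinusRect d {c} ν₁) (fun x => x < 0) γ γ' ∧
            multMinusRect c d {c} ν₁ γ' ≠ 0)) :
    ∀ z ∈ γ', ¬(z.1 = (c : ℤ) ∧ 0 < z.2 ∧ z.2 < (d : ℤ)) ∧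
      ¬(z.2 = 0 ∧ 0 < z.1 ∧ z.1 < (c : ℤ)) := by
  obtain ⟨hI, -, -, hin⟩ := hγ
  have hright := forall_not_onRightSide_of_multPlusRect_ne_zero (left_ne_zero_of_mul hmult) hI hin
  have hbottom :=
    forall_not_onBottomSide_of_multMinusRect_ne_zero (right_ne_zero_of_mul hmult) hI hin
  rcases h with ⟨hreach, hγ'⟩ | ⟨hreach, hγ'⟩
  · have hbottom' := hreach.forall_mem
      (fun _ _ _ hturn hz => hturn.snd_add_sub_ne_zero_of_left hz.1) hI hin hbottom
    have hright' := forall_not_onRightSide_of_multPlusRect_ne_zero hγ'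
      (hreach.increasing hI) (hreach.inside hin)
    exact fun z hz => ⟨hright' z hz, hbottom' z hz⟩
  · have hright' := hreach.forall_mem
      (fun _ _ _ hturn hz => hturn.fst_add_sub_ne_of_right hz.1) hI hin hright
    have hbottom' := forall_not_onBottomSide_of_multMinusRect_ne_zero hγ'
      (hreach.increasing hI) (hreach.inside hin)
    exact fun z hz => ⟨hright' z hz, hbottom' z hz⟩

/-- In the rectangle with `μ₁ = (c)` and `ν₂ = (d)`, if `mult(γ) ≠ 0` and
`γ′` appears (with nonzero multiplicity) in the recursion computing `mult₊(γ)` or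
`mult₋(γ)` (possibly `γ′ = γ`), then `γ′` has no lattice point in the relative interior of
the right or the bottom edge of the rectangle. -/
theorem no_interior_boundary_point_of_reaches (c d : ℕ) (hc : 0 < c) (hd : 0 < d)
    (μ₂ ν₁ : Multiset ℕ) (hμ₂ : IsPartition μ₂ c) (hν₁ : IsPartition ν₁ d)
    (γ γ' : List Pt) (hγ : IsPathRect c d γ)
    (hmult : multRect c d {c} μ₂ ν₁ {d} γ ≠ 0)
    (h : (Reaches (rect c d) (InitPlusRect d μ₂ {d}) (fun x => 0 < x) γ γ' ∧
            multPlusRect c d μ₂ {d} γ' ≠ 0) ∨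
         (Reaches (rect c d) (InitMinusRect d {c} ν₁) (fun x => x < 0) γ γ' ∧
            multMinusRect c d {c} ν₁ γ' ≠ 0)) :
    ∀ z ∈ γ', ¬(z.1 = (c : ℤ) ∧ 0 < z.2 ∧ z.2 < (d : ℤ)) ∧
      ¬(z.2 = 0 ∧ 0 < z.1 ∧ z.1 < (c : ℤ)) :=
  no_interior_boundary_point_of_reaches_general c d μ₂ ν₁ γ γ' hγ hmult h

end TropPaths
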